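/- Base case m = 0, t = 2: a tree of maximum degree 3 with exactly two adjacent degree-3 vertices has exactly one Laplacian eigenvalue greater than or equal to 4. -/

import Mathlib

/-! Deleting the edge `uv` leaves a disjoint union of paths, whose Laplacian quadratic form is
`< 4 ‖x‖²` for every `x ≠ 0`. Since deleting `uv` lowers `xᵀ L x` by exactly `(x u - x v)²`, the
form of `G` is `< 4 ‖x‖²` on the hyperplane `x u = x v`, so at most one eigenvalue is `≥ 4`
(two orthonormal eigenvectors would span a plane meeting that hyperplane). The vector
`e_u - e_v` has Rayleigh quotient `(3 + 3 + 2) / 2 = 4`, so at least one eigenvalue is `≥ 4`. -/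

open scoped Classical in
/-- Number of Laplacian eigenvalues (with multiplicity) that are `≥ 4`. -/
noncomputable def n4plus {V : Type*} [Fintype V] [DecidableEq V] (G : SimpleGraph V) : ℕ :=
  (Finset.univ.filter
    fun i => (4:ℝ) ≤ (SimpleGraph.posSemidef_lapMatrix ℝ G).1.eigenvalues i).card

open scoped Classical in
/-- The `j`-th largest Laplacian eigenvalue (1-indexed). -/
noncomputable def eigDesc {V : Type*} [Fintype V] [DecidableEq V] (G : SimpleGraph V) (j : ℕ) : ℝ :=
  ((Finset.univ.val.map (SimpleGraph.posSemidef_lapMatrix ℝ G).1.eigenvalues).sort (· ≤ ·)).getD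
    (Fintype.card V - j) 0

open Matrix Finset

namespace Matrix.IsHermitian

variable {n : Type*} [Fintype n] [DecidableEq n] {A : Matrix n n ℝ} (hA : A.IsHermitian)

lemma dotProduct_self_eq_sum_sq (x : n → ℝ) :
    x ⬝ᵥ x = ∑ i, (⇑(hA.eigenvectorBasis i) ⬝ᵥ x) ^ 2 := by
  have := hA.eigenvectorBasis.sum_inner_mul_inner (WithLp.toLp 2 x) (WithLp.toLp 2 x)
  simp only [EuclideanSpace.inner_eq_star_dotProduct, star_trivial] at this
  rw [← this]
  refine Finset.sum_congr rfl fun i _ => ?_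
  rw [dotProduct_comm]; ring

lemma dotProduct_mulVec_eq_sum (x : n → ℝ) :
    x ⬝ᵥ (A *ᵥ x) = ∑ i, hA.eigenvalues i * (⇑(hA.eigenvectorBasis i) ⬝ᵥ x) ^ 2 := by
  have := hA.eigenvectorBasis.sum_inner_mul_inner (WithLp.toLp 2 x) (WithLp.toLp 2 (A *ᵥ x))
  simp only [EuclideanSpace.inner_eq_star_dotProduct, star_trivial] at this
  rw [dotProduct_comm, ← this]
  refine Finset.sum_congr rfl fun i _ => ?_
  have hsymm : A *ᵥ x ⬝ᵥ ⇑(hA.eigenvectorBasis i) =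
      hA.eigenvalues i * (⇑(hA.eigenvectorBasis i) ⬝ᵥ x) := by
    rw [dotProduct_comm, dotProduct_mulVec, ← mulVec_transpose,
      ← conjTranspose_eq_transpose_of_trivial, hA.eq, hA.mulVec_eigenvectorBasis,
      smul_dotProduct, smul_eq_mul]
  rw [hsymm]; ring

lemma eigenvectorBasis_dotProduct (i j : n) :
    ⇑(hA.eigenvectorBasis i) ⬝ᵥ ⇑(hA.eigenvectorBasis j) = if i = j then 1 else 0 := by
  rw [← orthonormal_iff_ite.mp hA.eigenvectorBasis.orthonormal i j,
    EuclideanSpace.inner_eq_star_dotProduct, star_trivial, dotProduct_comm]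

lemma exists_le_eigenvalues_of_le_dotProduct_mulVec {c : ℝ} {x : n → ℝ} (hx : x ≠ 0)
    (h : c * (x ⬝ᵥ x) ≤ x ⬝ᵥ (A *ᵥ x)) : ∃ i, c ≤ hA.eigenvalues i := by
  by_contra! hlt
  obtain ⟨i, hi⟩ : ∃ i, ⇑(hA.eigenvectorBasis i) ⬝ᵥ x ≠ 0 := by
    by_contra! h0
    rw [Ne, ← dotProduct_self_eq_zero, hA.dotProduct_self_eq_sum_sq] at hx
    simp [h0] at hx
  have : x ⬝ᵥ (A *ᵥ x) < c * (x ⬝ᵥ x) := by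
    rw [hA.dotProduct_mulVec_eq_sum, hA.dotProduct_self_eq_sum_sq, mul_sum]
    exact sum_lt_sum (fun j _ => mul_le_mul_of_nonneg_right (hlt j).le (sq_nonneg _))
      ⟨i, mem_univ i, mul_lt_mul_of_pos_right (hlt i) (by positivity)⟩
  linarith

lemma card_filter_le_eigenvalues_le_one {c : ℝ} (w : n → ℝ)
    (h : ∀ x, x ≠ 0 → w ⬝ᵥ x = 0 → x ⬝ᵥ (A *ᵥ x) < c * (x ⬝ᵥ x)) :
    #{i | c ≤ hA.eigenvalues i} ≤ 1 := by
  refine Finset.card_le_one.mpr fun i hi j hj => ?_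
  by_contra hij
  simp only [mem_filter, mem_univ, true_and] at hi hj
  set b := fun k => ⇑(hA.eigenvectorBasis k)
  obtain ⟨α, β, hαβ, hw⟩ :
      ∃ α β : ℝ, (α ≠ 0 ∨ β ≠ 0) ∧ α * (w ⬝ᵥ b i) + β * (w ⬝ᵥ b j) = 0 := by
    by_cases hbi : w ⬝ᵥ b i = 0
    · exact ⟨1, 0, Or.inl one_ne_zero, by simp [hbi]⟩
    · exact ⟨w ⬝ᵥ b j, -(w ⬝ᵥ b i), Or.inr (neg_ne_zero.mpr hbi), by ring⟩
  set x := α • b i + β • b j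
  have hxx : x ⬝ᵥ x = α ^ 2 + β ^ 2 := by
    simp only [x, b, add_dotProduct, dotProduct_add, smul_dotProduct, dotProduct_smul,
      eigenvectorBasis_dotProduct, hij, Ne.symm hij, if_true, if_false, smul_eq_mul]
    ring
  have hxAx : x ⬝ᵥ (A *ᵥ x) = hA.eigenvalues i * α ^ 2 + hA.eigenvalues j * β ^ 2 := by
    simp only [x, b, mulVec_add, mulVec_smul, mulVec_eigenvectorBasis, add_dotProduct,
      dotProduct_add, smul_dotProduct, dotProduct_smul, eigenvectorBasis_dotProduct, hij,
      Ne.symm hij, if_true, if_false, smul_eq_mul]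
    ring
  have hx : x ≠ 0 := by
    rintro hx
    rw [hx, zero_dotProduct] at hxx
    rcases hαβ with h | h <;> nlinarith [sq_pos_of_ne_zero h, sq_nonneg α, sq_nonneg β]
  have hwx : w ⬝ᵥ x = 0 := by simp only [x, dotProduct_add, dotProduct_smul, smul_eq_mul, hw]
  have := h x hx hwx
  rw [hxAx, hxx] at this
  nlinarith [sq_nonneg α, sq_nonneg β]

lemma card_filter_le_eigenvalues_eq_one {c : ℝ} (w : n → ℝ)
    (h : ∀ x, x ≠ 0 → w ⬝ᵥ x = 0 → x ⬝ᵥ (A *ᵥ x) < c * (x ⬝ᵥ x))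
    {z : n → ℝ} (hz : z ≠ 0) (hcz : c * (z ⬝ᵥ z) ≤ z ⬝ᵥ (A *ᵥ z)) :
    #{i | c ≤ hA.eigenvalues i} = 1 := by
  obtain ⟨i, hi⟩ := hA.exists_le_eigenvalues_of_le_dotProduct_mulVec hz hcz
  exact le_antisymm (hA.card_filter_le_eigenvalues_le_one w h)
    (Finset.one_le_card.mpr ⟨i, by simpa using hi⟩)

end Matrix.IsHermitian

namespace SimpleGraph

variable {V : Type*} {G : SimpleGraph V}

theorem IsAcyclic.exists_mem_forall_adj_eq [Finite V] (hG : G.IsAcyclic) {S : Set V}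
    (hS : S.Nonempty) :
    ∃ a ∈ S, ∀ b ∈ S, ∀ c ∈ S, G.Adj a b → G.Adj a c → b = c := by
  have : Nonempty S := hS.to_subtype
  obtain ⟨_, a, p, hp, hmax⟩ := Walk.exists_isPath_forall_isPath_length_le_length (G.induce S)
  have hend : ∀ b (hb : b ∈ S), G.Adj a b → (⟨b, hb⟩ : S) = p.penultimate := by
    intro b hb hab
    have hadj : (G.induce S).Adj a ⟨b, hb⟩ := hab
    refine (hG.induce S).eq_penultimate_of_adj_end hp hadj ?_
    by_contra hb'
    have := hmax _ _ _ (hp.concat hb' hadj)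
    simp [Walk.length_concat] at this
  exact ⟨a, a.2, fun b hb c hc hab hac =>
    congrArg Subtype.val ((hend b hb hab).trans (hend c hc hac).symm)⟩

variable [Fintype V] [DecidableRel G.Adj]

lemma sum_sum_ite_adj_left (y : V → ℝ) :
    ∑ i, ∑ j, (if G.Adj i j then y i else 0) = ∑ i, G.degree i * y i := by
  simp_rw [G.degree_eq_sum_if_adj (R := ℝ), sum_mul, ite_mul, one_mul, zero_mul]

lemma sum_sum_ite_adj_right (y : V → ℝ) :
    ∑ i, ∑ j, (if G.Adj i j then y j else 0) = ∑ i, G.degree i * y i := by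
  rw [sum_comm, ← sum_sum_ite_adj_left (G := G)]
  exact sum_congr rfl fun i _ => sum_congr rfl fun j _ => if_congr (G.adj_comm _ _) rfl rfl

theorem two_mul_dotProduct_lapMatrix_mulVec_add_sum_sq_add [DecidableEq V] (x : V → ℝ) :
    2 * (x ⬝ᵥ (G.lapMatrix ℝ *ᵥ x)) +
        ∑ i, ∑ j, (if G.Adj i j then (x i + x j) ^ 2 else 0) =
      4 * ∑ i, G.degree i * x i ^ 2 := by
  have hsq : ∀ i j, (if G.Adj i j then (x i + x j) ^ 2 else 0) =
      (if G.Adj i j then x i ^ 2 else 0) + (if G.Adj i j then x j ^ 2 else 0) +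
        2 * (if G.Adj i j then x i * x j else 0) := by
    intro i j; split_ifs <;> ring
  simp_rw [hsq, sum_add_distrib, ← mul_sum, sum_sum_ite_adj_left, sum_sum_ite_adj_right,
    lapMatrix, sub_mulVec, dotProduct_sub, dotProduct_mulVec_degMatrix,
    dotProduct_mulVec_adjMatrix]
  simp only [sq, mul_assoc]
  ring

theorem IsAcyclic.dotProduct_lapMatrix_mulVec_lt [DecidableEq V] (hG : G.IsAcyclic)
    (hdeg : ∀ a, G.degree a ≤ 2) {x : V → ℝ} (hx : x ≠ 0) :
    x ⬝ᵥ (G.lapMatrix ℝ *ᵥ x) < 4 * (x ⬝ᵥ x) := by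
  by_contra! hge
  have hdegR : ∀ i, (G.degree i : ℝ) ≤ 2 := fun i => by exact_mod_cast hdeg i
  have hpairs : ∀ i, 0 ≤ ∑ j, (if G.Adj i j then (x i + x j) ^ 2 else 0) := fun i =>
    sum_nonneg fun j _ => by split_ifs <;> positivity
  have hslack : ∀ i, 0 ≤ (2 - G.degree i) * x i ^ 2 := fun i =>
    mul_nonneg (sub_nonneg.mpr (hdegR i)) (sq_nonneg _)
  -- `8 ‖x‖² - 2 xᵀLx` splits into two nonnegative sums, which must therefore vanish
  have hsplit : ∑ i, ∑ j, (if G.Adj i j then (x i + x j) ^ 2 else 0) +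
      4 * ∑ i, (2 - G.degree i) * x i ^ 2 =
        2 * (4 * (x ⬝ᵥ x) - x ⬝ᵥ (G.lapMatrix ℝ *ᵥ x)) := by
    have := G.two_mul_dotProduct_lapMatrix_mulVec_add_sum_sq_add x
    simp only [sub_mul, sum_sub_distrib, ← mul_sum, dotProduct, ← sq] at this ⊢
    linarith
  have hP := sum_nonneg fun i (_ : i ∈ univ) => hpairs i
  have hS := sum_nonneg fun i (_ : i ∈ univ) => hslack i
  have hpairs0 : ∑ i, ∑ j, (if G.Adj i j then (x i + x j) ^ 2 else 0) = 0 := by linarith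
  have hslack0 : ∑ i, (2 - G.degree i) * x i ^ 2 = 0 := by linarith
  have hneg : ∀ i j, G.Adj i j → x j = -x i := by
    intro i j hij
    have := (sum_eq_zero_iff_of_nonneg fun j _ => by split_ifs <;> positivity).mp
      ((sum_eq_zero_iff_of_nonneg fun i _ => hpairs i).mp hpairs0 i (mem_univ i)) j (mem_univ j)
    rw [if_pos hij, sq_eq_zero_iff] at this
    linarith
  have htwo : ∀ i, x i ≠ 0 → G.degree i = 2 := by
    intro i hi
    have := (sum_eq_zero_iff_of_nonneg fun i _ => hslack i).mp hslack0 i (mem_univ i)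
    have : (G.degree i : ℝ) = 2 := by
      rcases mul_eq_zero.mp this with h | h
      · linarith
      · exact absurd (pow_eq_zero_iff two_ne_zero |>.mp h) hi
    exact_mod_cast this
  obtain ⟨a, ha, hsingle⟩ := hG.exists_mem_forall_adj_eq (S := {i | x i ≠ 0})
    (Function.ne_iff.mp hx)
  obtain ⟨b, c, hbc, hN⟩ :=
    card_eq_two.mp ((G.card_neighborFinset_eq_degree a).trans (htwo a ha))
  have hab : G.Adj a b := (G.mem_neighborFinset a b).mp (hN ▸ mem_insert_self b {c})
  have hac : G.Adj a c :=
    (G.mem_neighborFinset a c).mp (hN ▸ mem_insert_of_mem (mem_singleton_self c))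
  have hsupp : ∀ d, G.Adj a d → x d ≠ 0 := fun d had => by
    rw [hneg a d had]; exact neg_ne_zero.mpr ha
  exact hbc (hsingle b (hsupp b hab) c (hsupp c hac) hab hac)

variable {u v : V}

theorem dotProduct_lapMatrix_mulVec_deleteEdges [DecidableEq V]
    [DecidableRel (G.deleteEdges {s(u, v)}).Adj] (h : G.Adj u v) (x : V → ℝ) :
    x ⬝ᵥ (G.lapMatrix ℝ *ᵥ x) =
      x ⬝ᵥ ((G.deleteEdges {s(u, v)}).lapMatrix ℝ *ᵥ x) + (x u - x v) ^ 2 := by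
  have hsplit : ∀ i j, (if G.Adj i j then (x i - x j) ^ 2 else 0) =
      (if (G.deleteEdges {s(u, v)}).Adj i j then (x i - x j) ^ 2 else 0) +
        ((if i = u ∧ j = v then (x i - x j) ^ 2 else 0) +
          (if i = v ∧ j = u then (x i - x j) ^ 2 else 0)) := by
    intro i j
    simp only [deleteEdges_adj, Set.mem_singleton_iff, Sym2.eq_iff]
    have := G.ne_of_adj h
    split_ifs <;> grind [G.adj_symm]
  rw [← toLinearMap₂'_apply', lapMatrix_toLinearMap₂', ← toLinearMap₂'_apply',
    lapMatrix_toLinearMap₂']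
  simp_rw [hsplit, sum_add_distrib]
  simp only [ite_and, sum_ite_irrel, sum_ite_eq', mem_univ, if_true, sum_const_zero]
  ring

theorem degree_deleteEdges_lt {s : Set (Sym2 V)} [DecidableRel (G.deleteEdges s).Adj]
    (h : G.Adj u v) (hs : s(u, v) ∈ s) : (G.deleteEdges s).degree u < G.degree u := by
  simp only [← card_neighborFinset_eq_degree]
  refine card_lt_card ((ssubset_iff_of_subset fun w hw => ?_).mpr ⟨v, ?_, ?_⟩)
  · simp only [mem_neighborFinset, deleteEdges_adj] at hw ⊢
    exact hw.1
  · simpa using h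
  · simp [hs]

theorem degree_deleteEdges_le_of_forall_degree_le {k : ℕ}
    [DecidableRel (G.deleteEdges {s(u, v)}).Adj] (h : G.Adj u v)
    (hdeg : ∀ w, G.degree w ≤ k + 1) (hmax : ∀ w, G.degree w = k + 1 → w = u ∨ w = v)
    (w : V) :
    (G.deleteEdges {s(u, v)}).degree w ≤ k := by
  by_cases hw : w = u ∨ w = v
  · have : (G.deleteEdges {s(u, v)}).degree w < G.degree w := by
      rcases hw with rfl | rfl
      · exact degree_deleteEdges_lt h rfl
      · exact degree_deleteEdges_lt h.symm Sym2.eq_swap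
    linarith [hdeg w]
  · have : G.degree w ≠ k + 1 := fun h' => hw (hmax w h')
    have := degree_le_of_le (G := G.deleteEdges {s(u, v)}) (v := w) (G.deleteEdges_le _)
    have := hdeg w
    omega

theorem dotProduct_lapMatrix_mulVec_single_sub_single [DecidableEq V] (h : G.Adj u v) :
    (Pi.single u 1 - Pi.single v 1) ⬝ᵥ
        (G.lapMatrix ℝ *ᵥ (Pi.single u 1 - Pi.single v 1)) = G.degree u + G.degree v + 2 := by
  have hne := G.ne_of_adj h
  simp only [lapMatrix, degMatrix, mulVec_sub, mulVec_single, MulOpposite.op_one, one_smul,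
    dotProduct_sub, sub_dotProduct, single_dotProduct, col_apply, Matrix.sub_apply,
    diagonal_apply_eq, diagonal_apply_ne _ hne, diagonal_apply_ne _ hne.symm, adjMatrix_apply,
    G.irrefl, h, h.symm, if_true, if_false]
  ring

end SimpleGraph

open SimpleGraph

/-- base case `m = 0`, `t = 2`: a tree of maximum degree 3 with exactly
two degree-3 vertices, which are adjacent, has exactly one Laplacian eigenvalue `≥ 4`. -/
theorem base_case_adjacent_junctions {V : Type*} [Fintype V] [DecidableEq V]
    (G : SimpleGraph V) [DecidableRel G.Adj] (hT : G.IsTree)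
    (hdeg : ∀ v : V, G.degree v ≤ 3)
    (u v : V) (hu : G.degree u = 3) (hv : G.degree v = 3)
    (honly : ∀ w : V, G.degree w = 3 → w = u ∨ w = v)
    (hadj : G.Adj u v) :
    n4plus G = 1 := by
  classical
  set H := G.deleteEdges {s(u, v)}
  have hH : H.IsAcyclic := hT.isAcyclic.anti (G.deleteEdges_le _)
  have hHdeg : ∀ w, H.degree w ≤ 2 :=
    degree_deleteEdges_le_of_forall_degree_le hadj hdeg honly
  set z : V → ℝ := Pi.single u 1 - Pi.single v 1
  have hbelow : ∀ x : V → ℝ, x ≠ 0 → z ⬝ᵥ x = 0 →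
      x ⬝ᵥ (G.lapMatrix ℝ *ᵥ x) < 4 * (x ⬝ᵥ x) := by
    intro x hx hzx
    rw [sub_dotProduct, single_one_dotProduct, single_one_dotProduct] at hzx
    rw [dotProduct_lapMatrix_mulVec_deleteEdges hadj, hzx, sq, zero_mul, add_zero]
    exact hH.dotProduct_lapMatrix_mulVec_lt hHdeg hx
  have hz : z ≠ 0 := fun h => by simpa [z, G.ne_of_adj hadj] using congrFun h u
  have habove : 4 * (z ⬝ᵥ z) ≤ z ⬝ᵥ (G.lapMatrix ℝ *ᵥ z) := by
    rw [dotProduct_lapMatrix_mulVec_single_sub_single hadj, hu, hv]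
    norm_num [z, G.ne_of_adj hadj]
  -- `n4plus` is stated with the classical `DecidableRel G.Adj` instance
  unfold n4plus
  convert (G.posSemidef_lapMatrix ℝ).1.card_filter_le_eigenvalues_eq_one _ hbelow hz habove
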